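/- For α ∈ (1,∞) and positive definite ρ (tr ρ = 1) and σ, the quantity Q_α^P(ρ||σ) = sup over rank-1 projective measurements {P_i} of Σ_i tr[P_i ρ]^α tr[P_i σ]^{1−α} equals sup_{ω>0} α tr[ρ ω^{1−1/α}] + (1−α) tr[σ ω]. -/

import Mathlib

open Matrix
open scoped ComplexOrder

noncomputable def mlog {d : ℕ} (A : Matrix (Fin d) (Fin d) ℂ) : Matrix (Fin d) (Fin d) ℂ :=
  cfc (R := ℝ) Real.log A

noncomputable def mpow {d : ℕ} (A : Matrix (Fin d) (Fin d) ℂ) (p : ℝ) : Matrix (Fin d) (Fin d) ℂ :=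
  cfc (R := ℝ) (fun t : ℝ => t ^ p) A

noncomputable def mexp {d : ℕ} (A : Matrix (Fin d) (Fin d) ℂ) : Matrix (Fin d) (Fin d) ℂ :=
  NormedSpace.exp A

/-- Kullback-Leibler divergence with the convention that terms with `P x = 0` contribute `0`. -/
noncomputable def KL {X : Type*} [Fintype X] (P Q : X → ℝ) : ℝ :=
  ∑ x, if P x = 0 then 0 else P x * Real.log (P x / Q x)

/-- A rank-one projective measurement: mutually orthogonal rank-1 projectors summing to 1. -/
def IsRankOneProjMeas {d : ℕ} (P : Fin d → Matrix (Fin d) (Fin d) ℂ) : Prop :=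
  (∀ i, (P i).IsHermitian) ∧ (∀ i j, P i * P j = if i = j then P i else 0) ∧
    (∑ i, P i = 1) ∧ (∀ i, (P i).rank = 1)

/-!
A positive definite `ω` is `∑ i, m i • P i` for a rank-one projective measurement `P` (its
eigenprojections) and eigenvalues `m i > 0`; conversely every such sum is positive definite.
For such `ω` the functional calculus acts eigenvalue by eigenvalue, so the objective splits as
`∑ i, (α * p i * m i ^ (1 - 1/α) + (1 - α) * q i * m i)` with `p i = tr (P i ρ)` and
`q i = tr (P i σ)`. By weighted AM-GM each summand is at most `p i ^ α * q i ^ (1 - α)`, with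
equality at `m i = (p i / q i) ^ α`, so each supremum dominates the other.
-/

namespace CompleteOrthogonalIdempotents

variable {ι A : Type*} [Fintype ι] {e : ι → A}

@[simps]
def sumSMulAlgHom (R : Type*) [CommSemiring R] [Semiring A] [Algebra R A]
    (he : CompleteOrthogonalIdempotents e) : (ι → R) →ₐ[R] A where
  toFun a := ∑ i, a i • e i
  map_one' := by simpa using he.complete
  map_mul' a b := by
    classical
    simp only [Pi.mul_apply, Finset.sum_mul_sum, smul_mul_smul_comm, he.mul_eq, smul_ite,
      smul_zero, Finset.sum_ite_eq, Finset.mem_univ, if_true]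
  map_zero' := by simp
  map_add' a b := by simp [add_smul, Finset.sum_add_distrib]
  commutes' r := by simp [Algebra.algebraMap_eq_smul_one, ← Finset.smul_sum, he.complete]

theorem spectrum_sum_smul_subset {𝕜 : Type*} [Field 𝕜] [Ring A] [Algebra 𝕜 A]
    (he : CompleteOrthogonalIdempotents e) (m : ι → 𝕜) :
    spectrum 𝕜 (∑ i, m i • e i) ⊆ Set.range m := by
  refine (AlgHom.spectrum_apply_subset (he.sumSMulAlgHom 𝕜) m).trans ?_
  simp only [Pi.spectrum_eq, Set.iUnion_subset_iff]
  intro i x hx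
  rw [← Algebra.algebraMap_self_apply (m i), spectrum.scalar_eq] at hx
  exact ⟨i, hx.symm⟩

theorem cfc_sum_smul [Ring A] [StarRing A] [Algebra ℝ A] [TopologicalSpace A] [StarModule ℝ A]
    [ContinuousFunctionalCalculus ℝ A IsSelfAdjoint] (he : CompleteOrthogonalIdempotents e)
    (he_sa : ∀ i, IsSelfAdjoint (e i)) (m : ι → ℝ) (f : ℝ → ℝ) :
    cfc f (∑ i, m i • e i) = ∑ i, f (m i) • e i := by
  classical
  let g := Lagrange.interpolate (Finset.univ.image m) id f
  have hg (i : ι) : g.eval (m i) = f (m i) :=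
    Lagrange.eval_interpolate_at_node f (Set.injOn_id _)
      (Finset.mem_image_of_mem m (Finset.mem_univ i))
  have hsa : IsSelfAdjoint (∑ i, m i • e i) :=
    isSelfAdjoint_sum _ fun i _ => (IsSelfAdjoint.all (m i)).smul (he_sa i)
  calc cfc f (∑ i, m i • e i) = cfc g.eval (∑ i, m i • e i) := cfc_congr fun x hx => by
        obtain ⟨i, rfl⟩ := he.spectrum_sum_smul_subset m hx
        exact (hg i).symm
    _ = Polynomial.aeval (he.sumSMulAlgHom ℝ m) g := cfc_polynomial g _ hsa
    _ = ∑ i, f (m i) • e i := by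
        rw [Polynomial.aeval_algHom_apply, Polynomial.aeval_pi_apply]
        simp [hg]

end CompleteOrthogonalIdempotents

theorem Matrix.PosDef.re_trace_mul_pos {n 𝕜 : Type*} [Fintype n] [RCLike 𝕜]
    {A Q : Matrix n n 𝕜} (hA : A.PosDef) (hQ : Q.IsHermitian) (hQQ : IsIdempotentElem Q)
    (hQ0 : Q ≠ 0) : 0 < RCLike.re (Q * A).trace := by
  have htr : (Q * A).trace = (Qᴴ * A * Q).trace := by
    rw [hQ.eq, trace_mul_cycle, hQQ.eq]
  have hne : Qᴴ * A * Q ≠ 0 := by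
    intro h
    refine hQ0 (ext_iff_mulVec.mpr fun x => ?_)
    rw [zero_mulVec]
    by_contra hx
    have := hA.re_dotProduct_pos hx
    rw [star_mulVec, ← dotProduct_mulVec, mulVec_mulVec, mulVec_mulVec, h] at this
    simp at this
  have hpos : 0 < (Q * A).trace := htr ▸
    (hA.posSemidef.conjTranspose_mul_mul_same Q).trace_nonneg.lt_of_ne'
      (mt (hA.posSemidef.conjTranspose_mul_mul_same Q).trace_eq_zero_iff.mp hne)
  exact (RCLike.pos_iff.mp hpos).1

theorem isRankOneProjMeas_iff {d : ℕ} {P : Fin d → Matrix (Fin d) (Fin d) ℂ} :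
    IsRankOneProjMeas P ↔
      (∀ i, (P i).IsHermitian) ∧ CompleteOrthogonalIdempotents P ∧ ∀ i, (P i).rank = 1 :=
  ⟨fun ⟨hH, hO, hS, hR⟩ => ⟨hH, ⟨OrthogonalIdempotents.iff_mul_eq.mpr hO, hS⟩, hR⟩,
    fun ⟨hH, hP, hR⟩ => ⟨hH, OrthogonalIdempotents.iff_mul_eq.mp hP.1, hP.complete, hR⟩⟩

theorem IsRankOneProjMeas.re_trace_mul_pos {d : ℕ} {P : Fin d → Matrix (Fin d) (Fin d) ℂ}
    (hP : IsRankOneProjMeas P) {A : Matrix (Fin d) (Fin d) ℂ} (hA : A.PosDef) (i : Fin d) :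
    0 < (P i * A).trace.re := by
  obtain ⟨hH, hP, hR⟩ := isRankOneProjMeas_iff.mp hP
  refine hA.re_trace_mul_pos (hH i) (hP.idem i) fun h => ?_
  simpa [h] using hR i

theorem CompleteOrthogonalIdempotents.posDef_sum_smul {ι n 𝕜 : Type*} [Fintype ι] [Fintype n]
    [DecidableEq n] [RCLike 𝕜] {P : ι → Matrix n n 𝕜} (hP : CompleteOrthogonalIdempotents P)
    (hH : ∀ i, (P i).IsHermitian) {m : ι → ℝ} (hm : ∀ i, 0 < m i) :
    (∑ i, m i • P i).PosDef := by
  have hsum : (∑ i, m i • P i).IsHermitian :=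
    isSelfAdjoint_sum _ fun i _ => (IsSelfAdjoint.all (m i)).smul (hH i)
  refine hsum.posDef_iff_eigenvalues_pos.mpr fun j => ?_
  have hj : hsum.eigenvalues j ∈ spectrum ℝ (∑ i, m i • P i) := by
    rw [hsum.spectrum_real_eq_range_eigenvalues]
    exact ⟨j, rfl⟩
  obtain ⟨i, hi⟩ := hP.spectrum_sum_smul_subset m hj
  exact hi ▸ hm i

theorem Matrix.rank_conjStarAlgAut {n R : Type*} [Fintype n] [DecidableEq n] [CommRing R]
    [StarRing R] (U : unitaryGroup n R) (D : Matrix n n R) :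
    (Unitary.conjStarAlgAut R _ U D).rank = D.rank := by
  have hU : IsUnit (star (U : Matrix n n R)).det := by
    simpa using UnitaryGroup.det_isUnit (star U)
  rw [Unitary.conjStarAlgAut_apply, rank_mul_eq_left_of_isUnit_det _ _ hU,
    rank_mul_eq_right_of_isUnit_det _ _ (UnitaryGroup.det_isUnit U)]

theorem Matrix.IsHermitian.exists_isRankOneProjMeas_eq_sum_smul {d : ℕ}
    {A : Matrix (Fin d) (Fin d) ℂ} (hA : A.IsHermitian) :
    ∃ P, IsRankOneProjMeas P ∧ A = ∑ i, hA.eigenvalues i • P i := by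
  let U := Unitary.conjStarAlgAut ℂ _ hA.eigenvectorUnitary
  let E : Fin d → Matrix (Fin d) (Fin d) ℂ := fun i => diagonal (Pi.single i 1)
  have hE : CompleteOrthogonalIdempotents E :=
    (CompleteOrthogonalIdempotents.single fun _ => ℂ).map (diagonalRingHom (Fin d) ℂ)
  have hdiag : diagonal (RCLike.ofReal ∘ hA.eigenvalues) = ∑ i, hA.eigenvalues i • E i := by
    ext a b
    by_cases hab : a = b <;> simp [E, Pi.single_apply, Matrix.sum_apply, hab]
  refine ⟨fun i => U (E i), isRankOneProjMeas_iff.mpr ⟨fun i => ?_, hE.map U.toRingEquiv.toRingHom,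
    fun i => ?_⟩, ?_⟩
  · refine IsSelfAdjoint.map (isHermitian_diagonal_iff.mpr fun j => ?_).isSelfAdjoint U
    rw [Pi.single_apply]
    split_ifs <;> simp
  · rw [rank_conjStarAlgAut, rank_diagonal]
    simp [Pi.single_apply]
  · conv_lhs => rw [hA.spectral_theorem, hdiag, map_sum]
    simp only [U, Unitary.conjStarAlgAut_apply, mul_smul_comm, smul_mul_assoc]

/-- The summand of outcome `i` in the objective at `ω = ∑ i, m i • P i`, where
`a = tr (P i ρ)` and `b = tr (P i σ)`. -/
noncomputable def variationalTerm (α a b m : ℝ) : ℝ :=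
  α * (a * m ^ (1 - 1 / α)) + (1 - α) * (b * m)

theorem variationalTerm_le {α a b m : ℝ} (hα : 1 ≤ α) (ha : 0 ≤ a) (hb : 0 < b) (hm : 0 ≤ m) :
    variationalTerm α a b m ≤ a ^ α * b ^ (1 - α) := by
  have hα0 : 0 < α := by linarith
  have hamgm := Real.geom_mean_le_arith_mean2_weighted (p₁ := a ^ α * b ^ (1 - α)) (p₂ := b * m)
    (by positivity : 0 ≤ 1 / α) (sub_nonneg.2 ((div_le_one hα0).2 hα)) (by positivity)
    (by positivity) (add_sub_cancel _ _)
  have hgeom : (a ^ α * b ^ (1 - α)) ^ (1 / α) * (b * m) ^ (1 - 1 / α) = a * m ^ (1 - 1 / α) := by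
    have hb1 : b ^ ((1 - α) * α⁻¹) * b ^ (1 - α⁻¹) = 1 := by
      rw [← Real.rpow_add hb, show (1 - α) * α⁻¹ + (1 - α⁻¹) = 0 by field_simp; ring,
        Real.rpow_zero]
    rw [Real.mul_rpow (by positivity) (by positivity), Real.mul_rpow hb.le hm, one_div,
      Real.rpow_rpow_inv ha hα0.ne', ← Real.rpow_mul hb.le]
    linear_combination (a * m ^ (1 - α⁻¹)) * hb1
  have hscale : α * (1 / α * (a ^ α * b ^ (1 - α)) + (1 - 1 / α) * (b * m))
      = a ^ α * b ^ (1 - α) + (α - 1) * (b * m) := by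
    field_simp
  rw [hgeom] at hamgm
  unfold variationalTerm
  linarith [mul_le_mul_of_nonneg_left hamgm hα0.le, hscale]

theorem variationalTerm_rpow_div {α a b : ℝ} (hα : α ≠ 0) (ha : 0 < a) (hb : 0 < b) :
    variationalTerm α a b ((a / b) ^ α) = a ^ α * b ^ (1 - α) := by
  have hab : 0 < a / b := div_pos ha hb
  have hpow : ((a / b) ^ α) ^ (1 - 1 / α) = (a / b) ^ α / (a / b) := by
    rw [← Real.rpow_mul hab.le, show α * (1 - 1 / α) = α - 1 by field_simp,
      Real.rpow_sub_one hab.ne']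
  rw [variationalTerm, hpow, Real.rpow_sub hb, Real.rpow_one, Real.div_rpow ha.le hb.le]
  field_simp
  ring

theorem objective_sum_smul_eq_sum_variationalTerm {d : ℕ} (α : ℝ) (ρ σ : Matrix (Fin d) (Fin d) ℂ)
    {P : Fin d → Matrix (Fin d) (Fin d) ℂ} (hP : CompleteOrthogonalIdempotents P)
    (hH : ∀ i, (P i).IsHermitian) (m : Fin d → ℝ) :
    α * (ρ * mpow (∑ i, m i • P i) (1 - 1 / α)).trace.re + (1 - α) * (σ * ∑ i, m i • P i).trace.re
      = ∑ i, variationalTerm α (P i * ρ).trace.re (P i * σ).trace.re (m i) := by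
  rw [mpow, hP.cfc_sum_smul hH]
  simp only [Finset.mul_sum, mul_smul_comm, trace_sum, trace_smul, Complex.re_sum, Complex.smul_re,
    trace_mul_comm ρ, trace_mul_comm σ, variationalTerm, Finset.sum_add_distrib, smul_eq_mul]
  congr 1 <;> exact Finset.sum_congr rfl fun i _ => by ring

theorem measured_renyi_variational_gt_one_general {d : ℕ} (α : ℝ) (hα : 1 < α)
    (ρ σ : Matrix (Fin d) (Fin d) ℂ) (hρ : ρ.PosDef) (hσ : σ.PosDef) :
    (⨆ P : {P : Fin d → Matrix (Fin d) (Fin d) ℂ // IsRankOneProjMeas P},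
        ∑ i, ((P.1 i * ρ).trace.re) ^ α * ((P.1 i * σ).trace.re) ^ (1 - α))
      = ⨆ ω : {ω : Matrix (Fin d) (Fin d) ℂ // ω.PosDef},
          (α * (ρ * mpow ω.1 (1 - 1 / α)).trace.re + (1 - α) * (σ * ω.1).trace.re) := by
  refine csSup_eq_csSup_of_forall_exists_le ?_ ?_
  · rintro _ ⟨⟨P, hP⟩, rfl⟩
    have hp := hP.re_trace_mul_pos hρ
    have hq := hP.re_trace_mul_pos hσ
    obtain ⟨hH, hP, -⟩ := isRankOneProjMeas_iff.mp hP
    have hω := hP.posDef_sum_smul hH fun i => Real.rpow_pos_of_pos (div_pos (hp i) (hq i)) α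
    refine ⟨_, ⟨⟨_, hω⟩, rfl⟩, ?_⟩
    dsimp only
    rw [objective_sum_smul_eq_sum_variationalTerm α ρ σ hP hH]
    simp only [variationalTerm_rpow_div (by positivity : α ≠ 0) (hp _) (hq _), le_refl]
  · rintro _ ⟨⟨ω, hω⟩, rfl⟩
    obtain ⟨P, hP, hωP⟩ := hω.isHermitian.exists_isRankOneProjMeas_eq_sum_smul
    refine ⟨_, ⟨⟨P, hP⟩, rfl⟩, ?_⟩
    obtain ⟨hH, hPi, -⟩ := isRankOneProjMeas_iff.mp hP
    dsimp only
    rw [hωP, objective_sum_smul_eq_sum_variationalTerm α ρ σ hPi hH]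
    exact Finset.sum_le_sum fun i _ => variationalTerm_le hα.le (hP.re_trace_mul_pos hρ i).le
      (hP.re_trace_mul_pos hσ i) (hω.eigenvalues_pos i).le

/-- Variational expression for the projectively measured Rényi quantity `Q_α^P`, `α > 1`. -/
theorem measured_renyi_variational_gt_one {d : ℕ} (α : ℝ) (hα : 1 < α)
    (ρ σ : Matrix (Fin d) (Fin d) ℂ) (hρ : ρ.PosDef) (hσ : σ.PosDef)
    (hρ1 : ρ.trace = 1) :
    (⨆ P : {P : Fin d → Matrix (Fin d) (Fin d) ℂ // IsRankOneProjMeas P},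
        ∑ i, ((P.1 i * ρ).trace.re) ^ α * ((P.1 i * σ).trace.re) ^ (1 - α))
      = ⨆ ω : {ω : Matrix (Fin d) (Fin d) ℂ // ω.PosDef},
          (α * (ρ * mpow ω.1 (1 - 1 / α)).trace.re + (1 - α) * (σ * ω.1).trace.re) :=
  measured_renyi_variational_gt_one_general α hα ρ σ hρ hσ
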